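/- arXiv:1202.1542 — 5 statements merged into one kernel-verified Lean document; each statement's English description precedes it below -/
import Mathlib

section
/- Let n be a positive integer, let 𝔅 be a set of pairs of permutations of equal length that is downward closed in the pair order, and let 𝒞 be a pattern class (a set of permutations downward closed under pattern containment). Then both 𝒞𝔅 = {τ : (σ,τ) ∈ 𝔅 for some σ ∈ 𝒞} and 𝔅𝒞 = {σ : (σ,τ) ∈ 𝔅 for some τ ∈ 𝒞} are pattern classes (downward closed under pattern containment). -/
/-- A permutation of length `n` (a bijection of `{0, …, n-1}`, identified with the
sequence of its values), packaged with its length. -/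
abbrev PermSig : Type := Σ n : ℕ, Equiv.Perm (Fin n)

/-- Pattern containment: the permutation `α` of length `k` is contained in the
permutation `τ` of length `n` if there is an increasing choice of positions on which
`τ` is order-isomorphic to `α`. -/
def Contains {k n : ℕ} (α : Equiv.Perm (Fin k)) (τ : Equiv.Perm (Fin n)) : Prop :=
  ∃ f : Fin k ↪o Fin n, ∀ i j : Fin k, α i < α j ↔ τ (f i) < τ (f j)

/-- The avoidance class `Av B`: all permutations containing no member of `B`. -/
def Av (B : Set PermSig) : Set PermSig :=
  {τ : PermSig | ∀ β ∈ B, ¬ Contains β.2 τ.2}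

/-- A pattern class: a set of permutations downward closed under pattern containment. -/
def IsPatternClass (C : Set PermSig) : Prop :=
  ∀ (k n : ℕ) (α : Equiv.Perm (Fin k)) (τ : Equiv.Perm (Fin n)),
    Contains α τ → (⟨n, τ⟩ : PermSig) ∈ C → (⟨k, α⟩ : PermSig) ∈ C

/-- The base relation of the poset `P(τ)` on values: `x ≺ y` whenever `x` appears
before `y` in `τ` and either `x > y`, or some value `z` appears between `x` and `y`
in `τ` with `x < y < z`. -/
def PQBase {n : ℕ} (τ : Equiv.Perm (Fin n)) (x y : Fin n) : Prop :=
  τ.symm x < τ.symm y ∧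
    (y < x ∨ ∃ z : Fin n, τ.symm x < τ.symm z ∧ τ.symm z < τ.symm y ∧ x < y ∧ y < z)

/-- The poset `P(τ)`: the transitive closure of the base relation. -/
def PQ {n : ℕ} (τ : Equiv.Perm (Fin n)) : Fin n → Fin n → Prop :=
  Relation.TransGen (PQBase τ)

/-- `σ` is a linear extension of `P(τ)`; equivalently, `(σ, τ)` is an allowable pair,
i.e. a priority queue can produce output `τ` from input `σ`. -/
def Allowable {n : ℕ} (σ τ : Equiv.Perm (Fin n)) : Prop :=
  ∀ x y : Fin n, PQ τ x y → σ.symm x < σ.symm y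

/-- `C𝒜`: the set of permutations obtainable by a priority queue from an input in `C`. -/
def ImageA (C : Set PermSig) : Set PermSig :=
  {τ : PermSig | ∃ σ : Equiv.Perm (Fin τ.1), (⟨τ.1, σ⟩ : PermSig) ∈ C ∧ Allowable σ τ.2}

/-- A pair of permutations of equal length. -/
abbrev PairSig : Type := Σ n : ℕ, Equiv.Perm (Fin n) × Equiv.Perm (Fin n)

/-- The pair order: `(α, β) ≼ (σ, τ)` if there is a set `S` of values (given by its
increasing enumeration `g`) such that `α` and `β` are order-isomorphic to the
subsequences `σ|_S` and `τ|_S` respectively.  The value `g i` of `σ` (resp. `τ`)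
corresponds to the value `i` of `α` (resp. `β`), so the condition is that the
positions appear in the same relative order. -/
def PairLE (p q : PairSig) : Prop :=
  ∃ g : Fin p.1 ↪o Fin q.1,
    (∀ i j : Fin p.1, p.2.1.symm i < p.2.1.symm j ↔ q.2.1.symm (g i) < q.2.1.symm (g j)) ∧
    (∀ i j : Fin p.1, p.2.2.symm i < p.2.2.symm j ↔ q.2.2.symm (g i) < q.2.2.symm (g j))

/-- Key lemma: extracting the pattern of `σ` on the value set enumerated by `g`. -/
lemma key_extract {k n : ℕ} (g : Fin k ↪o Fin n) (σ : Equiv.Perm (Fin n)) :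
    ∃ σ' : Equiv.Perm (Fin k),
      (∀ i j : Fin k, σ'.symm i < σ'.symm j ↔ σ.symm (g i) < σ.symm (g j)) ∧
      Contains σ' σ := by
  set h : Fin k → Fin n := fun i => σ.symm (g i) with hh
  have hinj : Function.Injective h := fun a b hab => g.injective (σ.symm.injective hab)
  set s : Finset (Fin n) := Finset.image h Finset.univ with hs
  have hcard : s.card = k := by
    rw [hs, Finset.card_image_of_injective _ hinj, Finset.card_univ, Fintype.card_fin]
  set e : Fin k ≃o s := s.orderIsoOfFin hcard with he
  have hmem : ∀ i, h i ∈ s := fun i => Finset.mem_image_of_mem h (Finset.mem_univ i)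
  set t : Fin k → Fin k := fun i => e.symm ⟨h i, hmem i⟩ with ht
  have tinj : Function.Injective t := fun a b hab => by
    have := e.symm.injective hab
    exact hinj (Subtype.ext_iff.mp this)
  have tbij : Function.Bijective t := (Fintype.bijective_iff_injective_and_card t).mpr
    ⟨tinj, rfl⟩
  let E : Fin k ≃ Fin k := Equiv.ofBijective t tbij
  refine ⟨E.symm, ?_, ?_⟩
  · intro i j
    have : E i < E j ↔ h i < h j := by
      simp only [E, Equiv.ofBijective_apply, ht]
      rw [e.symm.lt_iff_lt]
      rfl
    simpa [Equiv.symm_symm] using this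
  · have key : ∀ i j : Fin k, E i < E j ↔ h i < h j := by
      intro i j
      simp only [E, Equiv.ofBijective_apply, ht]
      rw [e.symm.lt_iff_lt]
      rfl
    have hmono : StrictMono (fun p : Fin k => h (E.symm p)) := by
      intro p q hpq
      have : E (E.symm p) < E (E.symm q) := by simpa using hpq
      exact (key _ _).mp this
    refine ⟨OrderEmbedding.ofStrictMono _ hmono, ?_⟩
    intro p q
    have hval : ∀ p : Fin k, σ (h (E.symm p)) = g (E.symm p) := fun p => by
      simp [hh]
    simp only [OrderEmbedding.coe_ofStrictMono, hval]
    constructor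
    · intro hpq
      have : E.symm p < E.symm q := by simpa [Equiv.symm_symm] using hpq
      exact g.strictMono this
    · intro hpq
      have : E.symm p < E.symm q := g.lt_iff_lt.mp hpq
      simpa [Equiv.symm_symm] using this

/-- If `𝔅` is a set of pairs of permutations of equal length that is downward closed
in the pair order and `𝒞` is a pattern class, then both
`𝒞𝔅 = {τ : (σ,τ) ∈ 𝔅 for some σ ∈ 𝒞}` and `𝔅𝒞 = {σ : (σ,τ) ∈ 𝔅 for some τ ∈ 𝒞}`
are pattern classes. -/

theorem pattern_classes_of_closed_pairs (B : Set PairSig)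
    (hB : ∀ p q : PairSig, PairLE p q → q ∈ B → p ∈ B)
    (C : Set PermSig) (hC : IsPatternClass C) :
    IsPatternClass {τ : PermSig | ∃ σ : Equiv.Perm (Fin τ.1),
        (⟨τ.1, (σ, τ.2)⟩ : PairSig) ∈ B ∧ (⟨τ.1, σ⟩ : PermSig) ∈ C} ∧
    IsPatternClass {σ : PermSig | ∃ τ : Equiv.Perm (Fin σ.1),
        (⟨σ.1, (σ.2, τ)⟩ : PairSig) ∈ B ∧ (⟨σ.1, τ⟩ : PermSig) ∈ C} := by
  
  constructor
  · intro k n α τ hcon hτ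
    obtain ⟨σ, hBm, hσC⟩ := hτ
    obtain ⟨f, hf⟩ := hcon
    have gmono : StrictMono (fun v : Fin k => τ (f (α.symm v))) := by
      intro v w hvw
      have : α (α.symm v) < α (α.symm w) := by simpa using hvw
      exact (hf _ _).mp this
    set g : Fin k ↪o Fin n := OrderEmbedding.ofStrictMono _ gmono with hg
    obtain ⟨σ', hσ'1, hσ'2⟩ := key_extract g σ
    refine ⟨σ', ?_, hC _ _ _ _ hσ'2 hσC⟩
    refine hB ⟨k, (σ', α)⟩ ⟨n, (σ, τ)⟩ ⟨g, hσ'1, ?_⟩ hBm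
    intro i j
    have : ∀ i : Fin k, τ.symm (g i) = f (α.symm i) := fun i => by
      simp [hg, OrderEmbedding.coe_ofStrictMono]
    rw [this, this]
    exact f.lt_iff_lt.symm
  · intro k n α σ hcon hσ
    obtain ⟨τ, hBm, hτC⟩ := hσ
    obtain ⟨f, hf⟩ := hcon
    have gmono : StrictMono (fun v : Fin k => σ (f (α.symm v))) := by
      intro v w hvw
      have : α (α.symm v) < α (α.symm w) := by simpa using hvw
      exact (hf _ _).mp this
    set g : Fin k ↪o Fin n := OrderEmbedding.ofStrictMono _ gmono with hg
    obtain ⟨τ', hτ'1, hτ'2⟩ := key_extract g τ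
    refine ⟨τ', ?_, hC _ _ _ _ hτ'2 hτC⟩
    refine hB ⟨k, (α, τ')⟩ ⟨n, (σ, τ)⟩ ⟨g, ?_, hτ'1⟩ hBm
    intro i j
    have : ∀ i : Fin k, σ.symm (g i) = f (α.symm i) := fun i => by
      simp [hg, OrderEmbedding.coe_ofStrictMono]
    rw [this, this]
    exact f.lt_iff_lt.symm
end

section
/- For every t ≥ 1, if δ_t denotes the decreasing permutation t (t−1) ⋯ 2 1, then Av(δ_t)𝒜 = Av(δ_t). -/
/-- For every `t ≥ 1`, if `δ_t` is the decreasing permutation `t (t-1) ⋯ 2 1`, then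
`Av(δ_t)𝒜 = Av(δ_t)`. -/
theorem imageA_av_decreasing (t : ℕ) (ht : 1 ≤ t) :
    ImageA (Av {⟨t, (Fin.revPerm : Equiv.Perm (Fin t))⟩}) =
      Av {⟨t, (Fin.revPerm : Equiv.Perm (Fin t))⟩} := by

  ext τp
  obtain ⟨n, τ⟩ := τp
  constructor
  · rintro ⟨σ, hσ, hall⟩ β hβ hcon
    simp only [Set.mem_singleton_iff] at hβ
    subst hβ
    refine hσ _ rfl ?_
    obtain ⟨f, hf⟩ := hcon
    have hv : ∀ i j : Fin t, i < j → τ (f j) < τ (f i) := fun i j h =>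
      (hf j i).mp (by simpa using Fin.rev_lt_rev.mpr h)
    have hg : StrictMono (fun i => σ.symm (τ (f i))) := by
      intro i j h
      refine hall _ _ (Relation.TransGen.single ⟨?_, Or.inl (hv i j h)⟩)
      simpa using f.strictMono h
    refine ⟨OrderEmbedding.ofStrictMono _ hg, ?_⟩
    intro i j
    simpa [OrderEmbedding.ofStrictMono] using hf i j
  · intro hτ
    refine ⟨τ, hτ, ?_⟩
    intro x y h
    induction h with
    | single h => exact h.1
    | tail _ h ih => exact lt_trans ih h.1
end

section
/- Av(12)𝒜 = Av(132); that is, the permutations obtainable as priority-queue outputs from decreasing input permutations are exactly the 132-avoiding permutations. -/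
/-- The pattern `132` (written 0-indexed). -/
noncomputable def p132 : Equiv.Perm (Fin 3) :=
  Equiv.ofBijective (![0, 2, 1] : Fin 3 → Fin 3) (by decide)

lemma p132_apply (i : Fin 3) : p132 i = ![0,2,1] i := rfl

def emb2 {n} (a b : Fin n) (h : a < b) : Fin 2 ↪o Fin n :=
  OrderEmbedding.ofStrictMono ![a,b] (by
    intro i j hij
    fin_cases i <;> fin_cases j <;> simp_all)

@[simp] lemma emb2_apply {n} (a b : Fin n) (h : a < b) (i : Fin 2) :
    emb2 a b h i = ![a,b] i := rfl

def emb3 {n} (a b c : Fin n) (h1 : a < b) (h2 : b < c) : Fin 3 ↪o Fin n :=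
  OrderEmbedding.ofStrictMono ![a,b,c] (by
    intro i j hij
    have := h1.trans h2
    fin_cases i <;> fin_cases j <;> simp_all)

@[simp] lemma emb3_apply {n} (a b c : Fin n) (h1 : a < b) (h2 : b < c) (i : Fin 3) :
    emb3 a b c h1 h2 i = ![a,b,c] i := rfl

/-- avoiding 12 means strictly decreasing -/
lemma av12_anti {n : ℕ} (σ : Equiv.Perm (Fin n))
    (h : ¬ Contains (1 : Equiv.Perm (Fin 2)) σ) : StrictAnti σ := by
  intro i j hij
  by_contra hc
  push_neg at hc
  have hne : σ i ≠ σ j := fun he => absurd (σ.injective he) (ne_of_lt hij)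
  have hlt : σ i < σ j := lt_of_le_of_ne hc hne
  exact h ⟨emb2 i j hij, by
    intro a b
    fin_cases a <;> fin_cases b <;>
      simp [Equiv.Perm.coe_one, hlt, le_of_lt hlt, not_lt.2 (le_of_lt hlt)]⟩

lemma symm_anti {n : ℕ} (σ : Equiv.Perm (Fin n)) (h : StrictAnti σ) :
    StrictAnti σ.symm := by
  intro x y hxy
  rcases lt_trichotomy (σ.symm x) (σ.symm y) with h1 | h1 | h1
  · have := h h1
    simp at this
    exact absurd hxy (not_lt.2 this.le)
  · exact absurd (σ.symm.injective h1) (ne_of_lt hxy)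
  · exact h1

lemma not_contains132 {n : ℕ} (τ : Equiv.Perm (Fin n))
    (h : ∀ x y : Fin n, PQBase τ x y → y < x) : ¬ Contains p132 τ := by
  rintro ⟨f, hf⟩
  have h01 : f 0 < f 1 := f.strictMono (by decide)
  have h12 : f 1 < f 2 := f.strictMono (by decide)
  have hxy : τ (f 0) < τ (f 2) := by
    have := (hf 0 2).1 (by rw [p132_apply, p132_apply]; decide)
    exact this
  have hyz : τ (f 2) < τ (f 1) := by
    have := (hf 2 1).1 (by rw [p132_apply, p132_apply]; decide)
    exact this
  have hb : PQBase τ (τ (f 0)) (τ (f 2)) := by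
    refine ⟨by simpa using h01.trans h12, Or.inr ⟨τ (f 1), by simpa using h01,
      by simpa using h12, hxy, hyz⟩⟩
  exact absurd hxy (not_lt.2 (h _ _ hb).le)

lemma contains132 {n : ℕ} (τ : Equiv.Perm (Fin n)) {x y : Fin n}
    (hb : PQBase τ x y) (hxy : ¬ y < x) : Contains p132 τ := by
  obtain ⟨hpos, hor⟩ := hb
  rcases hor with h | ⟨z, hpz1, hpz2, hx, hy⟩
  · exact absurd h hxy
  refine ⟨emb3 (τ.symm x) (τ.symm z) (τ.symm y) hpz1 hpz2, ?_⟩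
  intro a b
  fin_cases a <;> fin_cases b <;>
    simp [p132_apply, hx, hy, hx.trans hy, le_of_lt hx, le_of_lt hy,
      not_lt.2 (le_of_lt hx), not_lt.2 (le_of_lt hy), not_lt.2 (le_of_lt (hx.trans hy))]


/-- `Av(12)𝒜 = Av(132)`: the permutations obtainable as priority-queue outputs from
decreasing input permutations are exactly the 132-avoiding permutations. -/
theorem imageA_av12 :
    ImageA (Av {⟨2, (1 : Equiv.Perm (Fin 2))⟩}) = Av {⟨3, p132⟩} := by
  ext ⟨n, τ⟩
  constructor
  · rintro ⟨σ, hσ, hAll⟩ β hβ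
    simp only [Set.mem_singleton_iff] at hβ
    subst hβ
    have hσ12 : ¬ Contains (1 : Equiv.Perm (Fin 2)) σ := by
      have := hσ ⟨2, (1 : Equiv.Perm (Fin 2))⟩ rfl
      exact this
    have hanti := symm_anti σ (av12_anti σ hσ12)
    apply not_contains132
    intro x y hb
    have := hAll x y (Relation.TransGen.single hb)
    by_contra hc
    push_neg at hc
    rcases eq_or_lt_of_le hc with he | hlt
    · subst he; exact absurd this (lt_irrefl _)
    · exact absurd this (not_lt.2 (hanti hlt).le)
  · intro hAv
    have hnc : ¬ Contains p132 τ := hAv ⟨3, p132⟩ rfl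
    have hbase : ∀ x y : Fin n, PQBase τ x y → y < x := by
      intro x y hb
      by_contra hc
      exact hnc (contains132 τ hb hc)
    refine ⟨Fin.revPerm, ?_, ?_⟩
    · intro β hβ
      simp only [Set.mem_singleton_iff] at hβ
      subst hβ
      rintro ⟨f, hf⟩
      have h01 : f 0 < f 1 := f.strictMono (by decide)
      have := (hf 0 1).1 (by simp)
      simp only [Fin.revPerm_apply] at this
      rw [Fin.rev_lt_rev] at this
      exact absurd h01 (not_lt.2 this.le)
    · intro x y h
      have hyx : y < x := by
        induction h with
        | single hb => exact hbase _ _ hb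
        | tail _ hb ih => exact (hbase _ _ hb).trans ih
      simpa [Fin.rev_lt_rev] using hyx
end

section
/- For a permutation τ and values a₁, a₂, …, a_k, the relations a₁ ≺ a₂ ≺ ⋯ ≺ a_k hold in P(τ) (i.e., they form a chain of P(τ)) if and only if a₁, a₂, …, a_k appear in this order in τ and for each i with 1 ≤ i ≤ k−1, either a_i > a_{i+1}, or a_i < a_{i+1} and there is a value b_i appearing between a_i and a_{i+1} in τ with b_i > a_{i+1}. -/
/-- No closure is needed: a two-step path `x ≺ y ≺ z` always has `z < x`, or else `y` or the
witness of `y ≺ z` is a larger value between `x` and `z`. -/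
instance pqBase_isTrans {n : ℕ} (τ : Equiv.Perm (Fin n)) : IsTrans (Fin n) (PQBase τ) where
  trans x y z := by
    rintro ⟨hxy, hyx⟩ ⟨hyz, hzy⟩
    refine ⟨hxy.trans hyz, ?_⟩
    rcases lt_or_ge z x with hzx | hxz
    · exact Or.inl hzx
    have hxz : x < z := hxz.lt_of_ne (by rintro rfl; exact lt_asymm hxy hyz)
    refine Or.inr ?_
    rcases hzy with hzy | ⟨w, hyw, hwz, -, hzw⟩
    · rcases hyx with hyx | -
      · exact absurd (hzy.trans hyx) hxz.not_gt
      · exact ⟨y, hxy, hyz, hxz, hzy⟩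
    · exact ⟨w, hxy.trans hyw, hwz, hxz, hzw⟩

theorem pq_eq_pqBase {n : ℕ} (τ : Equiv.Perm (Fin n)) : PQ τ = PQBase τ :=
  Relation.transGen_eq_self

theorem pqBase_iff {n : ℕ} (τ : Equiv.Perm (Fin n)) (x y : Fin n) :
    PQBase τ x y ↔ τ.symm x < τ.symm y ∧
      (y < x ∨ x < y ∧ ∃ z : Fin n, τ.symm x < τ.symm z ∧ τ.symm z < τ.symm y ∧ y < z) := by
  unfold PQBase
  grind

theorem chain_iff_subsequence_general {k n : ℕ} (τ : Equiv.Perm (Fin n))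
    (a : Fin k → Fin n) :
    (∀ (i : ℕ) (h : i + 1 < k),
        PQ τ (a ⟨i, Nat.lt_of_succ_lt h⟩) (a ⟨i + 1, h⟩)) ↔
      (∀ (i : ℕ) (h : i + 1 < k),
        τ.symm (a ⟨i, Nat.lt_of_succ_lt h⟩) < τ.symm (a ⟨i + 1, h⟩) ∧
          (a ⟨i + 1, h⟩ < a ⟨i, Nat.lt_of_succ_lt h⟩ ∨
            (a ⟨i, Nat.lt_of_succ_lt h⟩ < a ⟨i + 1, h⟩ ∧
              ∃ b : Fin n, τ.symm (a ⟨i, Nat.lt_of_succ_lt h⟩) < τ.symm b ∧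
                τ.symm b < τ.symm (a ⟨i + 1, h⟩) ∧ a ⟨i + 1, h⟩ < b))) := by
  simp only [pq_eq_pqBase, pqBase_iff]

/-- The relations `a 0 ≺ a 1 ≺ ⋯ ≺ a (k-1)` hold in `P(τ)` if and only if the values
`a 0, …, a (k-1)` appear in this order in `τ` and, for each `i`, either
`a i > a (i+1)`, or `a i < a (i+1)` and some value `b` appears between `a i` and
`a (i+1)` in `τ` with `b > a (i+1)`. -/
theorem chain_iff_subsequence {k n : ℕ} (hk : 1 ≤ k) (τ : Equiv.Perm (Fin n))
    (a : Fin k → Fin n) :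
    (∀ (i : ℕ) (h : i + 1 < k),
        PQ τ (a ⟨i, Nat.lt_of_succ_lt h⟩) (a ⟨i + 1, h⟩)) ↔
      (∀ (i : ℕ) (h : i + 1 < k),
        τ.symm (a ⟨i, Nat.lt_of_succ_lt h⟩) < τ.symm (a ⟨i + 1, h⟩) ∧
          (a ⟨i + 1, h⟩ < a ⟨i, Nat.lt_of_succ_lt h⟩ ∨
            (a ⟨i, Nat.lt_of_succ_lt h⟩ < a ⟨i + 1, h⟩ ∧
              ∃ b : Fin n, τ.symm (a ⟨i, Nat.lt_of_succ_lt h⟩) < τ.symm b ∧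
                τ.symm b < τ.symm (a ⟨i + 1, h⟩) ∧ a ⟨i + 1, h⟩ < b))) :=
  chain_iff_subsequence_general τ a
end

section
/- If τ is a permutation such that P(τ) contains no 132-chain, then P(τ) has a linear extension that avoids the pattern 132. -/
/-- `P(τ)` has an `α`-chain: values `a 0 ≺ a 1 ≺ … ≺ a (k-1)` forming a chain of
`P(τ)` whose pattern is `α`. -/
def HasChain {k n : ℕ} (α : Equiv.Perm (Fin k)) (τ : Equiv.Perm (Fin n)) : Prop :=
  ∃ a : Fin k → Fin n,
    (∀ i j : Fin k, i < j → PQ τ (a i) (a j)) ∧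
    (∀ i j : Fin k, a i < a j ↔ α i < α j)

/-!
The linear extension is built greedily, keeping track of the minimum `t` of the entries
written so far. A permutation avoids 132 as soon as each entry is either a new minimum or
smaller than every later entry above the current minimum. So at each step we write a minimal
element of what is left of `P(τ)`: the least remaining value above `t` if it is minimal, and
otherwise the largest minimal value below `t`. This choice is always possible and obeys the
rule as long as no relation `w ≺ u` among the remaining values is an inversion `u < w` with
`t < u`. That invariant survives each step because a violation would give, through the
relations `x ≺ y` for `x > y` with `x` before `y` in `τ`, a 132-chain.
-/

open scoped List

theorem List.ofFn_comp_sublist {α : Type*} {k n : ℕ} (g : Fin n → α) (f : Fin k ↪o Fin n) :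
    List.ofFn (g ∘ f) <+ List.ofFn g :=
  List.sublist_iff_exists_fin_orderEmbedding_get_eq.2
    ⟨(Fin.castOrderIso List.length_ofFn).toOrderEmbedding.trans
      (f.trans (Fin.castOrderIso List.length_ofFn.symm).toOrderEmbedding), fun _ => by simp; rfl⟩

theorem exists_perm_ofFn_eq {n : ℕ} {l : List (Fin n)} (hnd : l.Nodup) (hmem : ∀ x, x ∈ l) :
    ∃ σ : Equiv.Perm (Fin n), List.ofFn σ = l := by
  classical
  have hlen : l.length = n := by
    simpa using Fintype.card_congr (hnd.getEquivOfForallMemList l hmem)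
  exact ⟨(finCongr hlen.symm).trans (hnd.getEquivOfForallMemList l hmem),
    List.ext_get (by simp [hlen]) fun i _ _ => by simp⟩

section PQ

variable {n : ℕ} {τ : Equiv.Perm (Fin n)} {x y z : Fin n}

theorem PQ.symm_lt (h : PQ τ x y) : τ.symm x < τ.symm y := by
  induction h with
  | single hb => exact hb.1
  | tail _ hb ih => exact ih.trans hb.1

theorem PQ.ne (h : PQ τ x y) : x ≠ y := by
  rintro rfl
  exact lt_irrefl _ h.symm_lt

theorem PQ.trans (hxy : PQ τ x y) (hyz : PQ τ y z) : PQ τ x z :=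
  Relation.TransGen.trans hxy hyz

theorem PQ.of_inversion (hpos : τ.symm x < τ.symm y) (hyx : y < x) : PQ τ x y :=
  Relation.TransGen.single ⟨hpos, Or.inl hyx⟩

theorem allowable_of_pairwise {σ : Equiv.Perm (Fin n)}
    (hpw : (List.ofFn σ).Pairwise (fun a b => ¬ PQ τ b a)) : Allowable σ τ := by
  intro x y hxy
  rcases lt_trichotomy (σ.symm x) (σ.symm y) with hlt | heq | hgt
  · exact hlt
  · exact absurd (σ.symm.injective heq) hxy.ne
  · exact absurd hxy (by simpa using List.pairwise_ofFn.1 hpw hgt)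

end PQ

theorem p132_apply_s8 : p132 0 = 0 ∧ p132 1 = 2 ∧ p132 2 = 1 := by
  simp [p132]

theorem exists_sublist_of_contains_p132 {n : ℕ} {σ : Equiv.Perm (Fin n)}
    (h : Contains p132 σ) : ∃ a b c, [a, b, c] <+ List.ofFn σ ∧ a < c ∧ c < b := by
  obtain ⟨f, hf⟩ := h
  obtain ⟨h0, h1, h2⟩ := p132_apply_s8
  refine ⟨σ (f 0), σ (f 1), σ (f 2), ?_, (hf 0 2).1 ?_, (hf 2 1).1 ?_⟩
  · simpa [List.ofFn_succ] using List.ofFn_comp_sublist σ f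
  all_goals simp only [h0, h1, h2]; decide

theorem hasChain_p132 {n : ℕ} {τ : Equiv.Perm (Fin n)} {a b c : Fin n} (hab : PQ τ a b)
    (hbc : PQ τ b c) (hac : a < c) (hcb : c < b) : HasChain p132 τ := by
  obtain ⟨h0, h1, h2⟩ := p132_apply_s8
  refine ⟨![a, b, c], ?_, ?_⟩
  · intro i j hij
    fin_cases i <;> fin_cases j <;> first
      | exact absurd hij (by decide)
      | exact hab
      | exact hbc
      | exact hab.trans hbc
  · intro i j
    fin_cases i <;> fin_cases j <;> simp [h0, h1, h2] <;> order

/-- `t` is the minimum of the entries written before `l` (`⊤` if there are none). -/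
def MinOrLeastAbove {n : ℕ} : WithTop (Fin n) → List (Fin n) → Prop
  | _, [] => True
  | t, c :: l => (c < t ∨ ∀ x ∈ l, t < x → c < x) ∧ MinOrLeastAbove (min t c) l

namespace MinOrLeastAbove

variable {n : ℕ} {a b c : Fin n}

theorem not_lt_of_sublist : ∀ {t : WithTop (Fin n)} {l : List (Fin n)},
    MinOrLeastAbove t l → [b, c] <+ l → t < c → ¬ c < b
  | _, [], _, hs, _ => by simp at hs
  | t, x :: l, ⟨hx, hl⟩, hs, htc => by
    rcases List.sublist_cons_iff.1 hs with hs | ⟨r, hr, hs⟩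
    · exact not_lt_of_sublist hl hs ((min_le_left t x).trans_lt htc)
    · obtain ⟨rfl, rfl⟩ := List.cons_eq_cons.1 hr
      have hc : c ∈ l := List.singleton_sublist.1 hs
      rcases hx with hbt | hbl
      · exact fun hcb => lt_asymm htc (WithTop.coe_lt_coe.2 hcb |>.trans hbt)
      · exact (hbl c hc htc).not_gt

theorem not_132 : ∀ {t : WithTop (Fin n)} {l : List (Fin n)},
    MinOrLeastAbove t l → [a, b, c] <+ l → a < c → ¬ c < b
  | _, [], _, hs, _ => by simp at hs
  | t, x :: l, ⟨_, hl⟩, hs, hac => by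
    rcases List.sublist_cons_iff.1 hs with hs | ⟨r, hr, hs⟩
    · exact not_132 hl hs hac
    · obtain ⟨rfl, rfl⟩ := List.cons_eq_cons.1 hr
      exact not_lt_of_sublist hl hs ((min_le_right t a).trans_lt (WithTop.coe_lt_coe.2 hac))

end MinOrLeastAbove

section Greedy

variable {n : ℕ} {τ : Equiv.Perm (Fin n)} {S : Finset (Fin n)} {t : WithTop (Fin n)}
  {b c e u v w w₀ : Fin n}

def PQMinimal (τ : Equiv.Perm (Fin n)) (S : Finset (Fin n)) (x : Fin n) : Prop :=
  x ∈ S ∧ ∀ y ∈ S, ¬ PQ τ y x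

def NoInversionAbove (τ : Equiv.Perm (Fin n)) (S : Finset (Fin n)) (t : WithTop (Fin n)) :
    Prop :=
  ∀ w ∈ S, ∀ u ∈ S, PQ τ w u → t < u → ¬ u < w

theorem NoInversionAbove.mono {S' : Finset (Fin n)} (h : NoInversionAbove τ S t)
    (hS : S' ⊆ S) :
    NoInversionAbove τ S' t :=
  fun w hw u hu => h w (hS hw) u (hS hu)

theorem exists_pqMinimal_le (hw : w ∈ S) :
    ∃ w₀, PQMinimal τ S w₀ ∧ (w₀ = w ∨ PQ τ w₀ w) := by
  classical
  obtain ⟨w₀, hw₀, hmin⟩ := (S.filter fun a => a = w ∨ PQ τ a w).exists_min_image τ.symm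
    ⟨w, Finset.mem_filter.2 ⟨hw, Or.inl rfl⟩⟩
  rw [Finset.mem_filter] at hw₀
  refine ⟨w₀, ⟨hw₀.1, fun y hy hyw₀ => ?_⟩, hw₀.2⟩
  have hyw : y = w ∨ PQ τ y w := Or.inr (hw₀.2.elim (· ▸ hyw₀) hyw₀.trans)
  exact (hmin y (Finset.mem_filter.2 ⟨hy, hyw⟩)).not_gt hyw₀.symm_lt

theorem lt_of_pq_of_pq (h : ¬ HasChain p132 τ) (hw₀ : w₀ = w ∨ PQ τ w₀ w) (hwu : PQ τ w u)
    (huw : u < w) : u < w₀ := by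
  rcases hw₀ with rfl | hw₀
  · exact huw
  rcases lt_trichotomy u w₀ with hlt | rfl | hgt
  · exact hlt
  · exact absurd rfl (hw₀.trans hwu).ne
  · exact absurd (hasChain_p132 hw₀ hwu hgt huw) h

theorem lt_of_pq_least_above (hS : ∀ x ∈ S, (x : WithTop (Fin n)) ≠ t)
    (hinv : NoInversionAbove τ S t) (he : e ∈ S) (hte : t < e)
    (hleast : ∀ x ∈ S, t < x → e ≤ x) (hv : v ∈ S) (hve : PQ τ v e) : v < t := by
  have hve' : v < e := lt_of_le_of_ne (not_lt.1 (hinv v hv e he hve hte)) hve.ne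
  exact (hS v hv).lt_or_gt.resolve_right fun htv => (hleast v hv htv).not_gt hve'

theorem not_pq_of_lt_least_above (h : ¬ HasChain p132 τ) (hinv : NoInversionAbove τ S t)
    (he : e ∈ S) (hte : t < e) (hleast : ∀ x ∈ S, t < x → e ≤ x) (hw₀ : w₀ ∈ S)
    (htw₀ : t < w₀) (hw₀e : w₀ ≠ e) (hve : PQ τ v e) (hvu : v < u) (hut : u < t) :
    ¬ PQ τ w₀ u := by
  intro hw₀u
  have hew₀ : e < w₀ := lt_of_le_of_ne (hleast w₀ hw₀ htw₀) hw₀e.symm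
  have hue : u < e := WithTop.coe_lt_coe.1 (hut.trans hte)
  rcases lt_or_gt_of_ne (τ.symm.injective.ne hue.ne) with hpos | hpos
  · exact hinv w₀ hw₀ e he (.of_inversion (hw₀u.symm_lt.trans hpos) hew₀) hte hew₀
  · exact h (hasChain_p132 hve (.of_inversion hpos hue) hvu hue)

theorem exists_max_pqMinimal_below (h : ¬ HasChain p132 τ)
    (hS : ∀ x ∈ S, (x : WithTop (Fin n)) ≠ t) (hinv : NoInversionAbove τ S t)
    (hb : PQMinimal τ S b) (hbt : b < t)
    (hblock : ∀ w₀, PQMinimal τ S w₀ → t < w₀ → ∀ u, b < u → u < t → ¬ PQ τ w₀ u) :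
    ∃ c, PQMinimal τ S c ∧ c < t ∧ NoInversionAbove τ S c := by
  classical
  obtain ⟨c, hc, hmax⟩ :=
    (S.filter fun x => PQMinimal τ S x ∧ x < t).exists_max_image id
    ⟨b, Finset.mem_filter.2 ⟨hb.1, hb, hbt⟩⟩
  obtain ⟨-, hcmin, hct⟩ := Finset.mem_filter.1 hc
  refine ⟨c, hcmin, hct, fun w hw u hu hwu hcu huw => ?_⟩
  have hcu : c < u := WithTop.coe_lt_coe.1 hcu
  obtain ⟨w₀, hw₀, hw₀w⟩ := exists_pqMinimal_le (τ := τ) hw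
  have huw₀ : u < w₀ := lt_of_pq_of_pq h hw₀w hwu huw
  have htw₀ : t < w₀ := (hS w₀ hw₀.1).lt_or_gt.resolve_left fun hw₀t =>
    (hmax w₀ (Finset.mem_filter.2 ⟨hw₀.1, hw₀, hw₀t⟩)).not_gt (hcu.trans huw₀)
  have hut : u < t := (hS u hu).lt_or_gt.resolve_right fun htu => hinv w hw u hu hwu htu huw
  have hbc : b ≤ c := hmax b (Finset.mem_filter.2 ⟨hb.1, hb, hbt⟩)
  exact hblock w₀ hw₀ htw₀ u (hbc.trans_lt hcu) hut (hw₀w.elim (· ▸ hwu) (·.trans hwu))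

theorem exists_minOrLeastAbove_step (h : ¬ HasChain p132 τ)
    (hS : ∀ x ∈ S, (x : WithTop (Fin n)) ≠ t) (hinv : NoInversionAbove τ S t)
    (hne : S.Nonempty) :
    ∃ c, PQMinimal τ S c ∧ (c < t ∨ ∀ x ∈ S, t < x → c ≤ x) ∧
      NoInversionAbove τ S (min t c) := by
  classical
  have of_below (c : Fin n) (hc : PQMinimal τ S c ∧ c < t ∧ NoInversionAbove τ S c) :
      ∃ c, PQMinimal τ S c ∧ (c < t ∨ ∀ x ∈ S, t < x → c ≤ x) ∧
        NoInversionAbove τ S (min t c) :=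
    ⟨c, hc.1, .inl hc.2.1, by rw [min_eq_right hc.2.1.le]; exact hc.2.2⟩
  by_cases habove : ∃ x ∈ S, t < x
  · obtain ⟨e, he, hleast⟩ := (S.filter fun x : Fin n => t < x).exists_min_image id
      (by simpa [Finset.filter_nonempty_iff] using habove)
    obtain ⟨he, hte⟩ := Finset.mem_filter.1 he
    replace hleast : ∀ x ∈ S, t < x → e ≤ x := fun x hx htx =>
      hleast x (Finset.mem_filter.2 ⟨hx, htx⟩)
    by_cases hemin : PQMinimal τ S e
    · exact ⟨e, hemin, .inr hleast, by rwa [min_eq_left hte.le]⟩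
    obtain ⟨v₀, hv₀, hv₀e⟩ : ∃ v₀ ∈ S, PQ τ v₀ e := by
      simpa [PQMinimal, he] using hemin
    obtain ⟨v, hv, hvv₀⟩ := exists_pqMinimal_le (τ := τ) hv₀
    have hve : PQ τ v e := hvv₀.elim (· ▸ hv₀e) (·.trans hv₀e)
    obtain ⟨c, hc⟩ := exists_max_pqMinimal_below h hS hinv hv
      (lt_of_pq_least_above hS hinv he hte hleast hv.1 hve)
      fun w₀ hw₀ htw₀ u hvu hut =>
        not_pq_of_lt_least_above h hinv he hte hleast hw₀.1 htw₀
          (fun hw₀e => hemin (hw₀e ▸ hw₀)) hve hvu hut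
    exact of_below c hc
  · obtain ⟨m, hm, -⟩ := exists_pqMinimal_le (τ := τ) hne.choose_spec
    have hmt : m < t := (hS m hm.1).lt_or_gt.resolve_right fun htm => habove ⟨m, hm.1, htm⟩
    obtain ⟨c, hc⟩ := exists_max_pqMinimal_below h hS hinv hm hmt
      fun w₀ hw₀ htw₀ _ _ _ => absurd ⟨w₀, hw₀.1, htw₀⟩ habove
    exact of_below c hc

theorem exists_minOrLeastAbove_list (h : ¬ HasChain p132 τ) (S : Finset (Fin n))
    (t : WithTop (Fin n)) (hS : ∀ x ∈ S, (x : WithTop (Fin n)) ≠ t)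
    (hinv : NoInversionAbove τ S t) :
    ∃ l : List (Fin n), l.Nodup ∧ (∀ x, x ∈ l ↔ x ∈ S) ∧
      l.Pairwise (fun a b => ¬ PQ τ b a) ∧ MinOrLeastAbove t l := by
  induction S using Finset.strongInduction generalizing t with
  | H S ih =>
    rcases S.eq_empty_or_nonempty with rfl | hne
    · exact ⟨[], by simp [MinOrLeastAbove]⟩
    obtain ⟨c, hc, hcrule, hinv'⟩ := exists_minOrLeastAbove_step h hS hinv hne
    have hS' : ∀ x ∈ S.erase c, (x : WithTop (Fin n)) ≠ min t c := by
      intro x hx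
      rcases min_choice t c with hm | hm <;> rw [hm]
      · exact hS x (Finset.mem_of_mem_erase hx)
      · exact WithTop.coe_injective.ne (Finset.ne_of_mem_erase hx)
    obtain ⟨l, hnd, hmem, hpw, hl⟩ :=
      ih _ (S.erase_ssubset hc.1) _ hS' (hinv'.mono (S.erase_subset c))
    refine ⟨c :: l, ?_, fun x => ?_, ?_, ?_, hl⟩
    · exact List.nodup_cons.2 ⟨fun hcl => by simpa using (hmem c).1 hcl, hnd⟩
    · by_cases hxc : x = c <;> simp [hmem, hxc, hc.1]
    · exact List.pairwise_cons.2
        ⟨fun a ha => hc.2 a (Finset.mem_of_mem_erase ((hmem a).1 ha)), hpw⟩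
    · refine hcrule.imp_right fun hle x hx htx => ?_
      obtain ⟨hxc, hxS⟩ := Finset.mem_erase.1 ((hmem x).1 hx)
      exact lt_of_le_of_ne (hle x hxS htx) (Ne.symm hxc)

end Greedy

/-- If `P(τ)` contains no `132`-chain then it has a `132`-avoiding linear
extension. -/
theorem no_chain_132_linear_extension {n : ℕ} (τ : Equiv.Perm (Fin n)) (h : ¬ HasChain p132 τ) :
    ∃ σ : Equiv.Perm (Fin n), Allowable σ τ ∧ ¬ Contains p132 σ := by
  obtain ⟨l, hnd, hmem, hpw, hl⟩ := exists_minOrLeastAbove_list h Finset.univ ⊤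
    (fun _ _ => WithTop.coe_ne_top) fun _ _ _ _ _ htop => absurd htop not_top_lt
  obtain ⟨σ, rfl⟩ := exists_perm_ofFn_eq hnd fun x => (hmem x).2 (Finset.mem_univ x)
  refine ⟨σ, allowable_of_pairwise hpw, fun hσ => ?_⟩
  obtain ⟨a, b, c, hs, hac, hcb⟩ := exists_sublist_of_contains_p132 hσ
  exact hl.not_132 hs hac hcb
end
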